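/- Let g, ĝ, (h_i)_{i∈ψ} and (ĥ_i)_{i∈φ} all be mutually independent random variables, each exponentially distributed with rate 1, where ψ is a nonempty finite index set and φ ⊆ ψ is nonempty. Fix r>0, α≥2 and distances d_i>0, and set η = g r^{-α}/Σ_{i∈ψ} h_i d_i^{-α} and η̂ = ĝ r^{-α}/Σ_{i∈φ} ĥ_i d_i^{-α}. Then for all T ≥ 0 and S_th ≥ 0, the FFR normalized average rate R_f = E[ln(1+η)·1_{η>T}·1_{η>S_th}] + (1/3)·E[ln(1+η̂)·1_{η̂>T}·1_{η≤S_th}] satisfies R_f = ∫_0^∞ [ ∏_{j∈ψ} (1 + max(e^t−1, T, S_th) r^α d_j^{-α})^{-1} + (1/3)·(1 − ∏_{j∈ψ}(1 + S_th r^α d_j^{-α})^{-1}) · ∏_{i∈φ} (1 + max(e^t−1, T) r^α d_i^{-α})^{-1} ] dt. -/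

import Mathlib

/-!
Conditionally on the interference `S = ∑ h_i d_i^{-α}`, an exponential signal fading makes the
SIR tail `P(η > x)` equal to the Laplace transform `E[exp (-x r^α S)]`, which by independence is
`∏ (1 + x r^α d_i^{-α})⁻¹`. The layer-cake formula turns `E[ln (1 + η) 1_{η > s}]` into
`∫₀^∞ P(η > max (e^t - 1) s) dt`, and the cell-edge term splits into `P(η ≤ S_th)` times an FR3
rate, because `η` and `η̂` are functions of disjoint families of independent fadings.
-/

open MeasureTheory ProbabilityTheory Real Set

lemma inv_one_add_exp_sub_one_mul_le {w t : ℝ} (hw : 0 < w) (ht : 0 ≤ t) :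
    (1 + (exp t - 1) * w)⁻¹ ≤ max 1 w⁻¹ * exp (-t) := by
  have he : 0 ≤ exp t - 1 := sub_nonneg.2 (one_le_exp ht)
  have hK : 1 ≤ w * max 1 w⁻¹ := by
    rw [← mul_inv_cancel₀ hw.ne']
    exact mul_le_mul_of_nonneg_left (le_max_right _ _) hw.le
  rw [exp_neg, ← div_eq_mul_inv, le_div_iff₀ (exp_pos t), inv_mul_le_iff₀ (by positivity)]
  nlinarith [le_max_left 1 w⁻¹, mul_le_mul_of_nonneg_left hK he]

lemma integrableOn_prod_inv_one_add_max_exp_sub_one_mul {κ : Type*} {s : Finset κ}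
    (hs : s.Nonempty) {w : κ → ℝ} (hw : ∀ i ∈ s, 0 < w i) {c : ℝ} (hc : 0 ≤ c) :
    IntegrableOn (fun t => ∏ i ∈ s, (1 + max (exp t - 1) c * w i)⁻¹) (Ioi 0) := by
  classical
  obtain ⟨i₀, hi₀⟩ := hs
  refine Integrable.mono' ((integrableOn_exp_neg_Ioi 0).const_mul (max 1 (w i₀)⁻¹))
    (by fun_prop : Measurable _).aestronglyMeasurable ?_
  filter_upwards [self_mem_ae_restrict measurableSet_Ioi] with t ht
  have hmax : 0 ≤ max (exp t - 1) c := le_max_of_le_right hc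
  have hfactor_nonneg : ∀ i ∈ s, 0 ≤ (1 + max (exp t - 1) c * w i)⁻¹ := fun i hi => by
    have := hw i hi
    positivity
  have hfactor_le_one : ∀ i ∈ s, (1 + max (exp t - 1) c * w i)⁻¹ ≤ 1 := fun i hi =>
    inv_le_one_of_one_le₀ (le_add_of_nonneg_right (mul_nonneg hmax (hw i hi).le))
  rw [Real.norm_of_nonneg (Finset.prod_nonneg hfactor_nonneg), ← Finset.mul_prod_erase _ _ hi₀]
  calc (1 + max (exp t - 1) c * w i₀)⁻¹
        * ∏ i ∈ s.erase i₀, (1 + max (exp t - 1) c * w i)⁻¹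
      ≤ (1 + max (exp t - 1) c * w i₀)⁻¹ :=
        mul_le_of_le_one_right (hfactor_nonneg i₀ hi₀)
          (Finset.prod_le_one (fun i hi => hfactor_nonneg i (Finset.mem_of_mem_erase hi))
            fun i hi => hfactor_le_one i (Finset.mem_of_mem_erase hi))
    _ ≤ (1 + (exp t - 1) * w i₀)⁻¹ := by
        have := hw i₀ hi₀
        have : 0 ≤ exp t - 1 := sub_nonneg.2 (one_le_exp ht.le)
        gcongr
        exact le_max_left _ _
    _ ≤ max 1 (w i₀)⁻¹ * exp (-t) := inv_one_add_exp_sub_one_mul_le (hw i₀ hi₀) ht.le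

namespace ProbabilityTheory

lemma ae_pos_expMeasure {r : ℝ} (hr : 0 < r) : ∀ᵐ x ∂expMeasure r, 0 < x := by
  have := isProbabilityMeasure_expMeasure hr
  simp only [ae_iff, not_lt]
  change expMeasure r (Iic 0) = 0
  rw [← ofReal_cdf, cdf_expMeasure_eq hr, if_pos le_rfl]
  simp

lemma expMeasure_Ioi {r x : ℝ} (hr : 0 < r) (hx : 0 ≤ x) :
    expMeasure r (Ioi x) = ENNReal.ofReal (exp (-(r * x))) := by
  have := isProbabilityMeasure_expMeasure hr
  have hle : exp (-(r * x)) ≤ 1 := exp_le_one_iff.2 (by nlinarith)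
  rw [← compl_Iic, prob_compl_eq_one_sub measurableSet_Iic, ← ofReal_cdf, cdf_expMeasure_eq hr,
    if_pos hx, ← ENNReal.ofReal_one, ← ENNReal.ofReal_sub _ (sub_nonneg.2 hle), sub_sub_cancel]

lemma mgf_id_expMeasure {r t : ℝ} (hr : 0 < r) (ht : t < r) :
    mgf id (expMeasure r) t = r / (r - t) := by
  have hdens : ∀ x, (exponentialPDF r x).toReal • exp (t * x)
      = indicator (Ici 0) (fun x => r * exp ((t - r) * x)) x := by
    intro x
    rw [exponentialPDF_eq]
    split_ifs with hx
    · rw [indicator_of_mem (mem_Ici.2 hx), ENNReal.toReal_ofReal (by positivity), smul_eq_mul,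
        mul_assoc, ← exp_add]
      ring_nf
    · simp [hx]
  change ∫ x, exp (t * x) ∂(volume.withDensity (exponentialPDF r)) = _
  rw [integral_withDensity_eq_integral_toReal_smul
    (show Measurable (exponentialPDF r) from (measurable_exponentialPDFReal r).ennreal_ofReal)
    (ae_of_all _ fun _ => ENNReal.ofReal_lt_top)]
  simp_rw [hdens]
  rw [integral_indicator measurableSet_Ici, integral_Ici_eq_integral_Ioi, integral_const_mul,
    integral_exp_mul_Ioi (by linarith), mul_zero, exp_zero, neg_div, ← div_neg, neg_sub,
    mul_one_div]

variable {Ω : Type*} [MeasurableSpace Ω] {μ : Measure Ω}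

lemma measureReal_mul_lt_eq_mgf [IsFiniteMeasure μ] {X S : Ω → ℝ} {r c : ℝ} (hr : 0 < r)
    (hc : 0 ≤ c) (hX : Measurable X) (hS : Measurable S) (hXexp : μ.map X = expMeasure r)
    (hS0 : ∀ᵐ ω ∂μ, 0 ≤ S ω) (hSX : IndepFun S X μ) :
    μ.real {ω | c * S ω < X ω} = mgf S μ (-(r * c)) := by
  have := isProbabilityMeasure_expMeasure hr
  have hE : MeasurableSet {p : ℝ × ℝ | c * p.1 < p.2} :=
    measurableSet_lt (measurable_fst.const_mul c) measurable_snd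
  have hlaplace : μ {ω | c * S ω < X ω} = ∫⁻ ω, ENNReal.ofReal (exp (-(r * c) * S ω)) ∂μ := by
    rw [show {ω | c * S ω < X ω} = (fun ω => (S ω, X ω)) ⁻¹' {p | c * p.1 < p.2} from rfl,
      ← Measure.map_apply (hS.prodMk hX) hE,
      (indepFun_iff_map_prod_eq_prod_map_map hS.aemeasurable hX.aemeasurable).1 hSX, hXexp,
      Measure.prod_apply hE, lintegral_map (measurable_measure_prodMk_left hE) hS]
    refine lintegral_congr_ae (hS0.mono fun ω hω => ?_)
    change expMeasure r (Ioi (c * S ω)) = ENNReal.ofReal (exp (-(r * c) * S ω))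
    rw [neg_mul, mul_assoc]
    exact expMeasure_Ioi hr (mul_nonneg hc hω)
  rw [measureReal_def, hlaplace, mgf, integral_eq_lintegral_of_nonneg_ae
    (ae_of_all _ fun _ => (exp_pos _).le) (by fun_prop)]

lemma iIndepFun.indepFun_precomp_of_disjoint {κ α β γ : Type*} [Finite α] [Finite β]
    [MeasurableSpace γ] {F : κ → Ω → γ} (hF : ∀ k, Measurable (F k)) (hind : iIndepFun F μ)
    {e₁ : α → κ} {e₂ : β → κ} (he : ∀ a b, e₁ a ≠ e₂ b) :
    IndepFun (fun ω a => F (e₁ a) ω) (fun ω b => F (e₂ b) ω) μ := by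
  classical
  have := Fintype.ofFinite α
  have := Fintype.ofFinite β
  have hdisj : Disjoint (Finset.univ.image e₁) (Finset.univ.image e₂) := by
    simpa [Finset.disjoint_left, eq_comm] using he
  exact (hind.indepFun_finset _ _ hdisj hF).comp
    (measurable_pi_lambda _ fun a => measurable_pi_apply
      ⟨e₁ a, Finset.mem_image_of_mem _ (Finset.mem_univ a)⟩)
    (measurable_pi_lambda _ fun b => measurable_pi_apply
      ⟨e₂ b, Finset.mem_image_of_mem _ (Finset.mem_univ b)⟩)

lemma IndepFun.setIntegral_preimage_inter_preimage {α β : Type*} [MeasurableSpace α]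
    [MeasurableSpace β] {X : Ω → α} {Y : Ω → β} (hXY : IndepFun X Y μ) (hX : Measurable X)
    (hY : Measurable Y) {A : Set α} {B : Set β} (hA : MeasurableSet A)
    (hB : MeasurableSet B) {f : β → ℝ} (hf : Measurable f) :
    ∫ ω in Y ⁻¹' B ∩ X ⁻¹' A, f (Y ω) ∂μ
      = μ.real (X ⁻¹' A) * ∫ ω in Y ⁻¹' B, f (Y ω) ∂μ := by
  have hprod : (Y ⁻¹' B ∩ X ⁻¹' A).indicator (fun ω => f (Y ω))
      = (A.indicator 1 ∘ X) * (B.indicator f ∘ Y) := by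
    ext ω
    by_cases hωA : X ω ∈ A <;> by_cases hωB : Y ω ∈ B <;> simp [hωA, hωB]
  rw [← integral_indicator ((hY hB).inter (hX hA)), hprod, hXY.integral_comp_mul_comp
    hX.aemeasurable hY.aemeasurable (measurable_one.indicator hA).aestronglyMeasurable
    (hf.indicator hB).aestronglyMeasurable, ← integral_indicator (hY hB),
    ← integral_indicator_one (hX hA)]
  rfl

lemma setIntegral_log_one_add_eq_integral_measureReal [IsFiniteMeasure μ] {η : Ω → ℝ}
    (hη : Measurable η) {s : ℝ} (hs : 0 ≤ s) :
    ∫ ω in {ω | s < η ω}, log (1 + η ω) ∂μ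
      = ∫ t in Ioi 0, μ.real {ω | max (exp t - 1) s < η ω} := by
  set f := indicator {ω | s < η ω} fun ω => log (1 + η ω) with hf_def
  have hmeas : MeasurableSet {ω | s < η ω} := measurableSet_lt measurable_const hη
  have hf : Measurable f := (measurable_const.add hη).log.indicator hmeas
  have hf0 : ∀ᵐ ω ∂μ, 0 ≤ f ω :=
    ae_of_all _ (indicator_nonneg fun ω (hω : s < η ω) => log_nonneg (by linarith))
  have hlevel : ∀ t, 0 < t → {ω | t < f ω} = {ω | max (exp t - 1) s < η ω} := by
    intro t ht
    ext ω
    simp only [mem_ofPred_eq, hf_def, indicator]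
    split_ifs with hω
    · rw [max_lt_iff, lt_log_iff_exp_lt (by linarith)]
      exact ⟨fun h => ⟨by linarith, hω⟩, fun h => by linarith [h.1]⟩
    · exact iff_of_false ht.not_gt fun h => hω ((le_max_right _ _).trans_lt h)
  have htail : Antitone fun t => μ.real {ω | max (exp t - 1) s < η ω} := fun a b hab =>
    measureReal_mono fun ω hω =>
      (max_le_max (sub_le_sub_right (exp_le_exp.2 hab) 1) le_rfl).trans_lt hω
  rw [← integral_indicator hmeas, integral_eq_lintegral_of_nonneg_ae hf0 hf.aestronglyMeasurable,
    lintegral_eq_lintegral_meas_lt μ hf0 hf.aemeasurable, integral_eq_lintegral_of_nonneg_ae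
      (ae_of_all _ fun _ => measureReal_nonneg) htail.measurable.aestronglyMeasurable]
  congr 1
  refine setLIntegral_congr_fun measurableSet_Ioi fun t ht => ?_
  rw [hlevel t ht, ofReal_measureReal]

/-- The rate `R_f` of the paper, at target SIR `T` and FFR threshold `S`. -/
noncomputable def ffrRate (μ : Measure Ω) (η₁ η₂ : Ω → ℝ) (T S : ℝ) : ℝ :=
  (∫ ω in {ω | T < η₁ ω ∧ S < η₁ ω}, log (1 + η₁ ω) ∂μ)
    + (1 / 3) * ∫ ω in {ω | T < η₂ ω ∧ η₁ ω ≤ S}, log (1 + η₂ ω) ∂μ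

lemma ffrRate_eq_integral_measureReal [IsProbabilityMeasure μ] {η₁ η₂ : Ω → ℝ}
    (h₁ : Measurable η₁) (h₂ : Measurable η₂) (hind : IndepFun η₁ η₂ μ) {T S : ℝ} (hT : 0 ≤ T)
    (hint₁ : IntegrableOn (fun t => μ.real {ω | max (exp t - 1) (max T S) < η₁ ω}) (Ioi 0))
    (hint₂ : IntegrableOn (fun t => μ.real {ω | max (exp t - 1) T < η₂ ω}) (Ioi 0)) :
    ffrRate μ η₁ η₂ T S = ∫ t in Ioi 0,
      (μ.real {ω | max (exp t - 1) (max T S) < η₁ ω}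
        + (1 / 3) * (1 - μ.real {ω | S < η₁ ω}) * μ.real {ω | max (exp t - 1) T < η₂ ω}) := by
  have hcell : {ω | T < η₁ ω ∧ S < η₁ ω} = {ω | max T S < η₁ ω} := by
    simp only [max_lt_iff]
  have hedge : ∫ ω in {ω | T < η₂ ω ∧ η₁ ω ≤ S}, log (1 + η₂ ω) ∂μ
      = μ.real {ω | η₁ ω ≤ S} * ∫ ω in {ω | T < η₂ ω}, log (1 + η₂ ω) ∂μ :=
    hind.setIntegral_preimage_inter_preimage h₁ h₂ measurableSet_Iic measurableSet_Ioi
      (f := fun x => log (1 + x)) (by fun_prop)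
  have hedge_prob : μ.real {ω | η₁ ω ≤ S} = 1 - μ.real {ω | S < η₁ ω} := by
    simp only [← not_lt, ← probReal_compl_eq_one_sub (measurableSet_lt measurable_const h₁)]
    rfl
  rw [ffrRate, hcell, hedge, hedge_prob,
    setIntegral_log_one_add_eq_integral_measureReal h₁ (le_max_of_le_left hT),
    setIntegral_log_one_add_eq_integral_measureReal h₂ hT,
    integral_add hint₁ (hint₂.const_mul _), integral_const_mul, mul_assoc]

noncomputable def sir {κ : Type*} (X : Ω → ℝ) (Y : κ → Ω → ℝ) (a : ℝ) (w : κ → ℝ)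
    (s : Finset κ) (ω : Ω) : ℝ :=
  X ω * a / ∑ i ∈ s, Y i ω * w i

structure IsRayleighFading {κ : Type*} (μ : Measure Ω) (r : ℝ) (X : Ω → ℝ) (Y : κ → Ω → ℝ)
    (s : Finset κ) : Prop where
  measurable_signal : Measurable X
  measurable_interferer : ∀ i ∈ s, Measurable (Y i)
  map_signal : μ.map X = expMeasure r
  map_interferer : ∀ i ∈ s, μ.map (Y i) = expMeasure r
  indep : iIndepFun (fun o : Option s => o.elim X fun i => Y i) μ

namespace IsRayleighFading

variable {κ : Type*} {r a : ℝ} {X : Ω → ℝ} {Y : κ → Ω → ℝ} {w : κ → ℝ} {s : Finset κ}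

lemma measurable_optionElim (hF : IsRayleighFading μ r X Y s) (o : Option s) :
    Measurable (o.elim X fun i => Y i) :=
  o.rec hF.measurable_signal fun i => hF.measurable_interferer i i.2

lemma measurable_sir (hF : IsRayleighFading μ r X Y s) : Measurable (sir X Y a w s) :=
  (hF.measurable_signal.mul_const a).div
    (Finset.measurable_sum _ fun i hi => (hF.measurable_interferer i hi).mul_const (w i))

variable [IsProbabilityMeasure μ]

/-- Given the interference `S = ∑ i ∈ s, Y i * w i`, the signal exceeds `c a⁻¹ S` with
probability `exp (-r c a⁻¹ S)`: the tail of the SIR is the Laplace transform of `S`, which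
factorises. -/
lemma measureReal_lt_sir (hF : IsRayleighFading μ r X Y s) (hr : 0 < r) (ha : 0 < a)
    (hs : s.Nonempty) (hw : ∀ i ∈ s, 0 < w i) {c : ℝ} (hc : 0 ≤ c) :
    μ.real {ω | c < sir X Y a w s ω} = ∏ i ∈ s, (1 + c * a⁻¹ * w i)⁻¹ := by
  have := hs.coe_sort
  set S : Ω → ℝ := fun ω => ∑ i : s, w i * Y i ω
  have hS : Measurable S :=
    Finset.measurable_sum _ fun i _ => (hF.measurable_interferer i i.2).const_mul _
  have hS_pos : ∀ᵐ ω ∂μ, 0 < S ω := by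
    have hY_pos : ∀ i : s, ∀ᵐ ω ∂μ, 0 < Y i ω := fun i =>
      ae_of_ae_map (hF.measurable_interferer i i.2).aemeasurable
        (by rw [hF.map_interferer i i.2]; exact ae_pos_expMeasure hr)
    filter_upwards [ae_all_iff.2 hY_pos] with ω hω
    exact Finset.sum_pos (fun i _ => mul_pos (hw i i.2) (hω i)) Finset.univ_nonempty
  have hset : {ω | c < sir X Y a w s ω} =ᵐ[μ] {ω | c * a⁻¹ * S ω < X ω} := by
    rw [Filter.eventuallyEq_set]
    filter_upwards [hS_pos] with ω hω
    have hS_eq : ∑ i ∈ s, Y i ω * w i = S ω := by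
      simp only [S, mul_comm (w _), Finset.sum_coe_sort s fun i => Y i ω * w i]
    change c < X ω * a / ∑ i ∈ s, Y i ω * w i ↔ _
    rw [hS_eq, lt_div_iff₀ hω, mul_right_comm, mul_inv_lt_iff₀ ha]
  have hSX : IndepFun S X μ := by
    have := hF.indep.indepFun_precomp_of_disjoint hF.measurable_optionElim
      (e₁ := fun _ : Unit => none) (e₂ := some) (fun _ _ => (Option.some_ne_none _).symm)
    have hsum : Measurable fun v : s → ℝ => ∑ i : s, w i * v i := by fun_prop
    exact (this.comp (measurable_pi_apply ()) hsum).symm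
  have hS_sum : S = ∑ i : s, fun ω => w i * Y i ω := (Finset.sum_fn _ _).symm
  have hindw : iIndepFun (fun (i : s) ω => w i * Y i ω) μ :=
    (hF.indep.precomp (Option.some_injective s)).comp _ fun i => measurable_const_mul (w i)
  rw [measureReal_congr hset, measureReal_mul_lt_eq_mgf hr (by positivity) hF.measurable_signal
    hS hF.map_signal (hS_pos.mono fun _ h => h.le) hSX, hS_sum,
    hindw.mgf_sum fun i => (hF.measurable_interferer i i.2).const_mul _,
    ← Finset.prod_coe_sort s]
  refine Finset.prod_congr rfl fun i _ => ?_
  have hwi := hw i i.2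
  rw [mgf_const_mul, ← mgf_id_map (hF.measurable_interferer i i.2).aemeasurable,
    hF.map_interferer i i.2, mgf_id_expMeasure hr (by
      nlinarith [mul_nonneg (mul_nonneg hc (inv_pos.2 ha).le) hwi.le]),
    show r - w i * -(r * (c * a⁻¹)) = r * (1 + c * a⁻¹ * w i) by ring,
    div_mul_cancel_left₀ hr.ne']

lemma integrableOn_measureReal_lt_sir (hF : IsRayleighFading μ r X Y s) (hr : 0 < r)
    (ha : 0 < a) (hs : s.Nonempty) (hw : ∀ i ∈ s, 0 < w i) {c : ℝ} (hc : 0 ≤ c) :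
    IntegrableOn (fun t => μ.real {ω | max (exp t - 1) c < sir X Y a w s ω}) (Ioi 0) := by
  refine (integrableOn_prod_inv_one_add_max_exp_sub_one_mul hs
    (fun i hi => mul_pos (inv_pos.2 ha) (hw i hi)) hc).congr_fun (fun t _ => ?_)
    measurableSet_Ioi
  rw [hF.measureReal_lt_sir hr ha hs hw (le_max_of_le_right hc)]
  simp only [mul_assoc]

end IsRayleighFading

lemma iIndepFun.indepFun_sir {κ κ' : Type*} {r r' a a' : ℝ} {X X' : Ω → ℝ} {Y : κ → Ω → ℝ}
    {Y' : κ' → Ω → ℝ} {w : κ → ℝ} {w' : κ' → ℝ} {s : Finset κ} {s' : Finset κ'}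
    (hF : IsRayleighFading μ r X Y s) (hF' : IsRayleighFading μ r' X' Y' s')
    (hind : iIndepFun (Sum.elim (fun o : Option s => o.elim X fun i => Y i)
      fun o : Option s' => o.elim X' fun i => Y' i) μ) :
    IndepFun (sir X Y a w s) (sir X' Y' a' w' s') μ := by
  have := (hind.indepFun_precomp_of_disjoint
    (Sum.rec hF.measurable_optionElim hF'.measurable_optionElim)
    (e₁ := Sum.inl) (e₂ := Sum.inr) fun _ _ => Sum.inl_ne_inr).comp
    (φ := fun v : Option s → ℝ => v none * a / ∑ i : s, v (some i) * w i)
    (ψ := fun v : Option s' → ℝ => v none * a' / ∑ i : s', v (some i) * w' i)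
    (by fun_prop) (by fun_prop)
  convert this using 1 <;> ext ω
  · exact congrArg (X ω * a / ·) (Finset.sum_coe_sort s fun i => Y i ω * w i).symm
  · exact congrArg (X' ω * a' / ·) (Finset.sum_coe_sort s' fun i => Y' i ω * w' i).symm

lemma iIndepFun_sumElim_optionElim {ι : Type*} [Fintype ι] {s : Finset ι} {X X' : Ω → ℝ}
    {Y Y' : ι → Ω → ℝ}
    (hind : iIndepFun (fun x : Bool ⊕ ι ⊕ s =>
      Sum.elim (fun b => if b then X' else X) (Sum.elim Y fun i => Y' i.1) x) μ) :
    iIndepFun (Sum.elim (fun o : Option (Finset.univ : Finset ι) => o.elim X fun i => Y i)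
      fun o : Option s => o.elim X' fun i => Y' i) μ := by
  let e : Option (Finset.univ : Finset ι) ⊕ Option s → Bool ⊕ ι ⊕ s :=
    Sum.elim (fun o => o.elim (.inl false) fun i => .inr (.inl i.1))
      (fun o => o.elim (.inl true) (.inr ∘ .inr))
  have he : e.Injective := by
    rintro ((_ | ⟨i, _⟩) | (_ | i)) ((_ | ⟨j, _⟩) | (_ | j)) h <;> simp [e] at h <;> simp [h]
  convert hind.precomp he using 1
  funext x
  rcases x with (_ | _) | (_ | _) <;> rfl

end ProbabilityTheory

theorem FFR_normalized_average_rate_uncorrelated_general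
    {Ω : Type*} [MeasurableSpace Ω] (μ : Measure Ω) [IsProbabilityMeasure μ]
    {ι : Type*} [Fintype ι] [Nonempty ι]
    (φ : Finset ι) (hφ : φ.Nonempty)
    (g ghat : Ω → ℝ) (h hhat : ι → Ω → ℝ)
    (hg_meas : Measurable g) (hghat_meas : Measurable ghat)
    (hh_meas : ∀ i, Measurable (h i)) (hhhat_meas : ∀ i, Measurable (hhat i))
    (hg_exp : Measure.map g μ = expMeasure 1)
    (hghat_exp : Measure.map ghat μ = expMeasure 1)
    (hh_exp : ∀ i, Measure.map (h i) μ = expMeasure 1)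
    (hhhat_exp : ∀ i ∈ φ, Measure.map (hhat i) μ = expMeasure 1)
    (h_indep : iIndepFun
      (fun x : Bool ⊕ ι ⊕ {i // i ∈ φ} =>
        Sum.elim (fun b => if b then ghat else g)
          (Sum.elim h (fun i => hhat i.1)) x) μ)
    (r α : ℝ) (hr : 0 < r)
    (d : ι → ℝ) (hd : ∀ i, 0 < d i)
    (T Sth : ℝ) (hT : 0 ≤ T) (hSth : 0 ≤ Sth) :
    (∫ ω in {ω | T < g ω * r ^ (-α) / (∑ i, h i ω * d i ^ (-α)) ∧
                 Sth < g ω * r ^ (-α) / (∑ i, h i ω * d i ^ (-α))},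
        Real.log (1 + g ω * r ^ (-α) / (∑ i, h i ω * d i ^ (-α))) ∂μ)
      + (1/3) * ∫ ω in {ω | T < ghat ω * r ^ (-α) / (∑ i ∈ φ, hhat i ω * d i ^ (-α)) ∧
                            g ω * r ^ (-α) / (∑ i, h i ω * d i ^ (-α)) ≤ Sth},
          Real.log (1 + ghat ω * r ^ (-α) / (∑ i ∈ φ, hhat i ω * d i ^ (-α))) ∂μ
      = ∫ t in Set.Ioi (0 : ℝ),
          (∏ j, (1 + max (max (Real.exp t - 1) T) Sth * r ^ α * d j ^ (-α))⁻¹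
            + (1/3) * (1 - ∏ j, (1 + Sth * r ^ α * d j ^ (-α))⁻¹)
                * ∏ i ∈ φ, (1 + max (Real.exp t - 1) T * r ^ α * d i ^ (-α))⁻¹) := by
  have hsplit := iIndepFun_sumElim_optionElim h_indep
  have hF₁ : IsRayleighFading μ 1 g h Finset.univ :=
    ⟨hg_meas, fun i _ => hh_meas i, hg_exp, fun i _ => hh_exp i, hsplit.precomp Sum.inl_injective⟩
  have hF₂ : IsRayleighFading μ 1 ghat hhat φ :=
    ⟨hghat_meas, fun i _ => hhhat_meas i, hghat_exp, hhhat_exp, hsplit.precomp Sum.inr_injective⟩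
  have ha : 0 < r ^ (-α) := rpow_pos_of_pos hr _
  have hw : ∀ i, 0 < d i ^ (-α) := fun i => rpow_pos_of_pos (hd i) _
  have hTS : 0 ≤ max T Sth := le_max_of_le_left hT
  have tail₁ := fun c (hc : 0 ≤ c) =>
    hF₁.measureReal_lt_sir one_pos ha Finset.univ_nonempty (fun i _ => hw i) hc
  have tail₂ := fun c (hc : 0 ≤ c) => hF₂.measureReal_lt_sir one_pos ha hφ (fun i _ => hw i) hc
  -- the left-hand side unfolds to `ffrRate μ (sir g h …) (sir ghat hhat …) T Sth`
  refine (ffrRate_eq_integral_measureReal hF₁.measurable_sir hF₂.measurable_sir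
    (hsplit.indepFun_sir hF₁ hF₂) hT
    (hF₁.integrableOn_measureReal_lt_sir one_pos ha Finset.univ_nonempty (fun i _ => hw i) hTS)
    (hF₂.integrableOn_measureReal_lt_sir one_pos ha hφ (fun i _ => hw i) hT)).trans
    (setIntegral_congr_fun measurableSet_Ioi fun t _ => ?_)
  rw [tail₁ _ (le_max_of_le_right hTS), tail₁ _ hSth, tail₂ _ (le_max_of_le_right hT),
    rpow_neg hr.le, inv_inv, max_assoc]

/-- the FFR normalized average rate in the interference-limited,
uncorrelated sub-band case.  With FR1 SIR `η = g r^{-α} / ∑ i, h i * d i^{-α}`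
and FR3 SIR `η̂ = ĝ r^{-α} / ∑ i ∈ φ, ĥ i * d i^{-α}`, all fadings mutually
independent unit-rate exponentials, for `T ≥ 0` and `S_th ≥ 0`,
`R_f = E[ln(1+η)·1_{η>T}·1_{η>S_th}] + (1/3)·E[ln(1+η̂)·1_{η̂>T}·1_{η≤S_th}]`
equals
`∫_0^∞ [∏_{j}(1 + max(e^t−1,T,S_th) r^α d_j^{-α})⁻¹
 + (1/3)(1 − ∏_j (1+S_th r^α d_j^{-α})⁻¹) ∏_{i∈φ}(1 + max(e^t−1,T) r^α d_i^{-α})⁻¹] dt`. -/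
theorem FFR_normalized_average_rate_uncorrelated
    {Ω : Type*} [MeasurableSpace Ω] (μ : Measure Ω) [IsProbabilityMeasure μ]
    {ι : Type*} [Fintype ι] [Nonempty ι]
    (φ : Finset ι) (hφ : φ.Nonempty)
    (g ghat : Ω → ℝ) (h hhat : ι → Ω → ℝ)
    (hg_meas : Measurable g) (hghat_meas : Measurable ghat)
    (hh_meas : ∀ i, Measurable (h i)) (hhhat_meas : ∀ i, Measurable (hhat i))
    (hg_exp : Measure.map g μ = expMeasure 1)
    (hghat_exp : Measure.map ghat μ = expMeasure 1)
    (hh_exp : ∀ i, Measure.map (h i) μ = expMeasure 1)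
    (hhhat_exp : ∀ i ∈ φ, Measure.map (hhat i) μ = expMeasure 1)
    (h_indep : iIndepFun
      (fun x : Bool ⊕ ι ⊕ {i // i ∈ φ} =>
        Sum.elim (fun b => if b then ghat else g)
          (Sum.elim h (fun i => hhat i.1)) x) μ)
    (r α : ℝ) (hr : 0 < r) (hα : 2 ≤ α)
    (d : ι → ℝ) (hd : ∀ i, 0 < d i)
    (T Sth : ℝ) (hT : 0 ≤ T) (hSth : 0 ≤ Sth) :
    (∫ ω in {ω | T < g ω * r ^ (-α) / (∑ i, h i ω * d i ^ (-α)) ∧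
                 Sth < g ω * r ^ (-α) / (∑ i, h i ω * d i ^ (-α))},
        Real.log (1 + g ω * r ^ (-α) / (∑ i, h i ω * d i ^ (-α))) ∂μ)
      + (1/3) * ∫ ω in {ω | T < ghat ω * r ^ (-α) / (∑ i ∈ φ, hhat i ω * d i ^ (-α)) ∧
                            g ω * r ^ (-α) / (∑ i, h i ω * d i ^ (-α)) ≤ Sth},
          Real.log (1 + ghat ω * r ^ (-α) / (∑ i ∈ φ, hhat i ω * d i ^ (-α))) ∂μ
      = ∫ t in Set.Ioi (0 : ℝ),
          (∏ j, (1 + max (max (Real.exp t - 1) T) Sth * r ^ α * d j ^ (-α))⁻¹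
            + (1/3) * (1 - ∏ j, (1 + Sth * r ^ α * d j ^ (-α))⁻¹)
                * ∏ i ∈ φ, (1 + max (Real.exp t - 1) T * r ^ α * d i ^ (-α))⁻¹) :=
  FFR_normalized_average_rate_uncorrelated_general μ φ hφ g ghat h hhat hg_meas hghat_meas hh_meas
    hhhat_meas hg_exp hghat_exp hh_exp hhhat_exp h_indep r α hr d hd T Sth hT hSth
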